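/- Let p0, p1 ≥ 0 with p0 + p1 > 0. For every Bloch vector (x,y,z) with x² + y² + z² ≤ 1, the coherent information of Λ2(ρ) = (p0 ρ + p1 XρX)/(p0+p1) satisfies S(Λ2(ρ(x,y,z))) − S(Λ2^c(ρ(x,y,z))) ≤ 1 − h(p1/(p0+p1)), with equality at (x,y,z) = (0,0,0). Hence max_ρ [S(Λ2(ρ)) − S(Λ2^c(ρ))] = 1 − h(p1/(p0+p1)). -/

import Mathlib

/-!
`Λ₂` maps the Bloch vector `(x, y, z)` to `(x, κy, κz)` with `κ = (p₀ - p₁)/(p₀ + p₁)`, and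
`Λ₂ᶜ(ρ)` is the Bloch state with vector `(√(1 - κ²) x, 0, κ)`. So both entropies are values of
`H(v) = h((1 + √v)/2)`, the entropy of a qubit whose Bloch vector has squared length `v`, which is
decreasing on `[0, 1]`. Hence the coherent information is at most `H(x²) - H(κ² + (1 - κ²) x²)`,
and since `H(κ²) = h(p₁/(p₀ + p₁))` it remains to show `H(t) + H(c) ≤ 1 + H(c + (1 - c) t)` on
`[0, 1]²`. For `c < 1` the map `u ↦ H(c + (1 - c) u) - H(u)` is increasing, equal to `H(c) - 1`
at `u = 0`: with `a = √u`, `b = √(c + (1 - c) u)` one has `1 - b² = (1 - c)(1 - a²)`, so its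
derivative has the sign of `ψ(a) - ψ(b)`, where `ψ(s) = (1/s - s) log((1 + s)/(1 - s))` is
decreasing on `(0, 1)`.
-/

open Matrix

noncomputable section

/-- Pauli matrix X. -/
def PX : Matrix (Fin 2) (Fin 2) ℂ := !![0, 1; 1, 0]

/-- Pauli matrix Y. -/
def PY : Matrix (Fin 2) (Fin 2) ℂ := !![0, -Complex.I; Complex.I, 0]

/-- Pauli matrix Z. -/
def PZ : Matrix (Fin 2) (Fin 2) ℂ := !![1, 0; 0, -1]

/-- The covariant Pauli channel `Λ(ρ) = p₀ ρ + p₁ (XρX + YρY) + p₃ ZρZ`. -/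
def pauliChannel (p0 p1 p3 : ℝ) (ρ : Matrix (Fin 2) (Fin 2) ℂ) : Matrix (Fin 2) (Fin 2) ℂ :=
  (p0 : ℂ) • ρ + (p1 : ℂ) • (PX * ρ * PX + PY * ρ * PY) + (p3 : ℂ) • (PZ * ρ * PZ)

/-- The qubit state with Bloch vector `(x, y, z)`. -/
def blochState (x y z : ℝ) : Matrix (Fin 2) (Fin 2) ℂ :=
  (1 / 2 : ℂ) • ((1 : Matrix (Fin 2) (Fin 2) ℂ) + (x : ℂ) • PX + (y : ℂ) • PY + (z : ℂ) • PZ)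

/-- Von Neumann entropy (base-2) of a Hermitian matrix, via its eigenvalues. -/
def vN {n : ℕ} (A : Matrix (Fin n) (Fin n) ℂ) : ℝ :=
  if h : A.IsHermitian then -∑ i, h.eigenvalues i * Real.logb 2 (h.eigenvalues i) else 0

/-- Multiset of eigenvalues (with multiplicity) of a Hermitian matrix. -/
def eigs {n : ℕ} (A : Matrix (Fin n) (Fin n) ℂ) : Multiset ℝ :=
  if h : A.IsHermitian then Finset.univ.val.map h.eigenvalues else 0

/-- The binary entropy function `h(t) = -t log₂ t - (1-t) log₂ (1-t)`. -/
def binEnt (t : ℝ) : ℝ := -(t * Real.logb 2 t) - (1 - t) * Real.logb 2 (1 - t)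

/-- The channel `Λ₂(ρ) = (p₀ ρ + p₁ XρX)/(p₀+p₁)`. -/
def lam2 (p0 p1 : ℝ) (ρ : Matrix (Fin 2) (Fin 2) ℂ) : Matrix (Fin 2) (Fin 2) ℂ :=
  ((p0 / (p0 + p1) : ℝ) : ℂ) • ρ + ((p1 / (p0 + p1) : ℝ) : ℂ) • (PX * ρ * PX)

/-- The complementary channel of `Λ₂`, applied to the Bloch state `ρ(x,y,z)`. -/
def lam2c (p0 p1 x : ℝ) : Matrix (Fin 2) (Fin 2) ℂ :=
  !![((p0 / (p0 + p1) : ℝ) : ℂ), ((Real.sqrt (p0 * p1) / (p0 + p1) * x : ℝ) : ℂ);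
     ((Real.sqrt (p0 * p1) / (p0 + p1) * x : ℝ) : ℂ), ((p1 / (p0 + p1) : ℝ) : ℂ)]

open Real Set

lemma two_mul_le_log_one_add_sub_log_one_sub {s : ℝ} (h0 : 0 ≤ s) (h1 : s < 1) :
    2 * s ≤ log (1 + s) - log (1 - s) := by
  have hs := hasSum_log_sub_log_of_abs_lt_one (abs_lt.mpr ⟨by linarith, h1⟩)
  simpa using le_hasSum hs 0 fun k _ => by positivity

lemma antitoneOn_inv_sub_mul_log_one_add_sub_log_one_sub :
    AntitoneOn (fun s => (s⁻¹ - s) * (log (1 + s) - log (1 - s))) (Ioo 0 1) := by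
  have hderiv : ∀ s ∈ Ioo (0 : ℝ) 1, HasDerivAt (fun s => (s⁻¹ - s) * (log (1 + s) - log (1 - s)))
      (2 / s - (s ^ 2)⁻¹ * (1 + s ^ 2) * (log (1 + s) - log (1 - s))) s := by
    rintro s ⟨hs0, hs1⟩
    refine (((hasDerivAt_inv hs0.ne').sub (hasDerivAt_id' s)).mul
      ((((hasDerivAt_id' s).const_add 1).log (by linarith)).sub
        (((hasDerivAt_id' s).const_sub 1).log (by linarith)))).congr_deriv ?_
    simp only [Pi.sub_apply]
    field_simp
    ring
  refine antitoneOn_of_hasDerivWithinAt_nonpos (convex_Ioo 0 1)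
    (fun s hs => (hderiv s hs).continuousAt.continuousWithinAt)
    (fun s hs => (hderiv s (interior_subset hs)).hasDerivWithinAt) ?_
  intro s hs
  rw [interior_Ioo] at hs
  obtain ⟨hs0, hs1⟩ := hs
  have hL := two_mul_le_log_one_add_sub_log_one_sub hs0.le hs1
  have h2s : 2 / s ≤ (s ^ 2)⁻¹ * (1 + s ^ 2) * (2 * s) := by
    rw [div_le_iff₀ hs0]
    field_simp
    nlinarith
  nlinarith [show 0 ≤ (s ^ 2)⁻¹ * (1 + s ^ 2) by positivity]

lemma hasDerivAt_binEntropy_one_add_sqrt_div_two {v : ℝ} (h0 : 0 < v) (h1 : v < 1) :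
    HasDerivAt (fun w => binEntropy ((1 + √w) / 2))
      (-(log (1 + √v) - log (1 - √v)) / (4 * √v)) v := by
  have hs0 : 0 < √v := sqrt_pos.mpr h0
  have hs1 : √v < 1 := (sqrt_lt' one_pos).mpr (by linarith)
  have hd := (hasDerivAt_binEntropy (p := (1 + √v) / 2) (by positivity) (by linarith)).comp v
    (((hasDerivAt_sqrt h0.ne').const_add 1).div_const 2)
  refine hd.congr_deriv ?_
  rw [show 1 - (1 + √v) / 2 = (1 - √v) / 2 by ring, log_div (by linarith) two_ne_zero,
    log_div (by linarith) two_ne_zero]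
  field_simp
  ring

lemma monotoneOn_binEntropy_sqrt_affine_sub {c : ℝ} (hc0 : 0 ≤ c) (hc1 : c < 1) :
    MonotoneOn (fun u => binEntropy ((1 + √(c + (1 - c) * u)) / 2) - binEntropy ((1 + √u) / 2))
      (Icc 0 1) := by
  refine monotoneOn_of_hasDerivWithinAt_nonneg (convex_Icc 0 1) (by fun_prop)
    (f' := fun u => (1 - c) * (-(log (1 + √(c + (1 - c) * u)) - log (1 - √(c + (1 - c) * u)))
        / (4 * √(c + (1 - c) * u))) - -(log (1 + √u) - log (1 - √u)) / (4 * √u)) ?_ ?_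
  · intro u hu
    rw [interior_Icc] at hu
    obtain ⟨hu0, hu1⟩ := hu
    have hv := hasDerivAt_binEntropy_one_add_sqrt_div_two (v := c + (1 - c) * u)
      (by nlinarith) (by nlinarith)
    refine ((hv.comp u (((hasDerivAt_id' u).const_mul (1 - c)).const_add c)).sub
      (hasDerivAt_binEntropy_one_add_sqrt_div_two hu0 hu1)).hasDerivWithinAt.congr_deriv ?_
    ring
  · intro u hu
    rw [interior_Icc] at hu
    obtain ⟨hu0, hu1⟩ := hu
    set a := √u
    set b := √(c + (1 - c) * u)
    have ha0 : 0 < a := sqrt_pos.mpr hu0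
    have hab : a ≤ b := sqrt_le_sqrt (by nlinarith)
    have hb1 : b < 1 := (sqrt_lt' one_pos).mpr (by nlinarith)
    have hb0 : 0 < b := ha0.trans_le hab
    have ha1 : 0 < 1 - a ^ 2 := by nlinarith
    have hψ := antitoneOn_inv_sub_mul_log_one_add_sub_log_one_sub ⟨ha0, hab.trans_lt hb1⟩
      ⟨hb0, hb1⟩ hab
    have hb_inv : b⁻¹ - b = (1 - c) * (1 - a ^ 2) / b := by
      have hb2 : b ^ 2 = c + (1 - c) * a ^ 2 := by
        rw [sq_sqrt hu0.le, sq_sqrt (by nlinarith)]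
      field_simp
      linear_combination -hb2
    have ha_inv : a⁻¹ - a = (1 - a ^ 2) / a := by field_simp
    simp only [hb_inv, ha_inv] at hψ
    have e : (1 - c) * (-(log (1 + b) - log (1 - b)) / (4 * b)) -
          -(log (1 + a) - log (1 - a)) / (4 * a) =
        ((1 - a ^ 2) / a * (log (1 + a) - log (1 - a))
          - (1 - c) * (1 - a ^ 2) / b * (log (1 + b) - log (1 - b))) / (4 * (1 - a ^ 2)) := by
      field_simp
      ring
    rw [e]
    exact div_nonneg (by linarith) (by positivity)

lemma binEntropy_sqrt_add_binEntropy_sqrt_le {c t : ℝ} (hc0 : 0 ≤ c) (hc1 : c ≤ 1) (ht0 : 0 ≤ t)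
    (ht1 : t ≤ 1) :
    binEntropy ((1 + √t) / 2) + binEntropy ((1 + √c) / 2) ≤
      log 2 + binEntropy ((1 + √(c + (1 - c) * t)) / 2) := by
  rcases hc1.eq_or_lt with rfl | hc1
  · simpa using binEntropy_le_log_two
  · have h := monotoneOn_binEntropy_sqrt_affine_sub hc0 hc1 ⟨le_rfl, zero_le_one⟩
      ⟨ht0, ht1⟩ ht0
    simp only [mul_zero, add_zero, sqrt_zero, one_div, binEntropy_two_inv] at h
    linarith

lemma binEnt_eq_binEntropy_div_log_two (t : ℝ) : binEnt t = binEntropy t / log 2 := by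
  simp only [binEnt, binEntropy, logb, log_inv]
  ring

lemma binEnt_one_sub (t : ℝ) : binEnt (1 - t) = binEnt t := by
  simp only [binEnt_eq_binEntropy_div_log_two, binEntropy_one_sub]

/-- The entropy, in bits, of a qubit state whose Bloch vector has squared length `v`. -/
def qubitEntropy (v : ℝ) : ℝ := binEnt ((1 + √v) / 2)

lemma qubitEntropy_zero : qubitEntropy 0 = 1 := by
  rw [qubitEntropy, sqrt_zero, add_zero, one_div, binEnt_eq_binEntropy_div_log_two,
    binEntropy_two_inv, div_self (log_pos one_lt_two).ne']

lemma qubitEntropy_sq (r : ℝ) : qubitEntropy (r ^ 2) = binEnt ((1 + r) / 2) := by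
  rw [qubitEntropy, sqrt_sq_eq_abs]
  rcases abs_cases r with ⟨h, -⟩ | ⟨h, -⟩
  · rw [h]
  · rw [h, ← binEnt_one_sub]
    ring_nf

lemma qubitEntropy_antitoneOn : AntitoneOn qubitEntropy (Icc 0 1) := by
  intro u hu v hv huv
  have hmem : ∀ w ∈ Icc (0 : ℝ) 1, (1 + √w) / 2 ∈ Icc 2⁻¹ 1 := fun w hw =>
    ⟨by linarith [sqrt_nonneg w], by linarith [sqrt_le_one.mpr hw.2]⟩
  simp only [qubitEntropy, binEnt_eq_binEntropy_div_log_two]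
  exact div_le_div_of_nonneg_right
    (binEntropy_strictAntiOn.antitoneOn (hmem u hu) (hmem v hv) (by gcongr)) (log_pos one_lt_two).le

lemma qubitEntropy_add_qubitEntropy_le {c t : ℝ} (hc0 : 0 ≤ c) (hc1 : c ≤ 1) (ht0 : 0 ≤ t)
    (ht1 : t ≤ 1) :
    qubitEntropy t + qubitEntropy c ≤ 1 + qubitEntropy (c + (1 - c) * t) := by
  have hlog : 0 < log 2 := log_pos one_lt_two
  simp only [qubitEntropy, binEnt_eq_binEntropy_div_log_two]
  rw [← add_div, one_add_div hlog.ne']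
  exact div_le_div_of_nonneg_right (binEntropy_sqrt_add_binEntropy_sqrt_le hc0 hc1 ht0 ht1) hlog.le

lemma qubitEntropy_sub_qubitEntropy_le {κ x y z : ℝ} (hκ : κ ^ 2 ≤ 1)
    (hxyz : x ^ 2 + y ^ 2 + z ^ 2 ≤ 1) :
    qubitEntropy (x ^ 2 + κ ^ 2 * (y ^ 2 + z ^ 2)) - qubitEntropy (κ ^ 2 + (1 - κ ^ 2) * x ^ 2) ≤
      1 - qubitEntropy (κ ^ 2) := by
  have hx : x ^ 2 ≤ 1 := by nlinarith
  have hyz : κ ^ 2 * (y ^ 2 + z ^ 2) ≤ y ^ 2 + z ^ 2 := mul_le_of_le_one_left (by positivity) hκ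
  have hmono := qubitEntropy_antitoneOn ⟨sq_nonneg x, hx⟩ ⟨by positivity, by linarith⟩
    (le_add_of_nonneg_right (by positivity) : x ^ 2 ≤ x ^ 2 + κ ^ 2 * (y ^ 2 + z ^ 2))
  linarith [qubitEntropy_add_qubitEntropy_le (sq_nonneg κ) hκ (sq_nonneg x) hx]

lemma vN_eq_qubitEntropy {A : Matrix (Fin 2) (Fin 2) ℂ} (hA : A.IsHermitian) (htr : A.trace = 1)
    {d : ℝ} (hdet : A.det = d) : vN A = qubitEntropy (1 - 4 * d) := by
  have hsum : hA.eigenvalues 0 + hA.eigenvalues 1 = 1 := by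
    have h := hA.trace_eq_sum_eigenvalues
    rw [htr, Fin.sum_univ_two] at h
    simpa using congrArg Complex.re h.symm
  have hprod : hA.eigenvalues 0 * hA.eigenvalues 1 = d := by
    have h := hA.det_eq_prod_eigenvalues
    rw [hdet, Fin.prod_univ_two] at h
    simpa using congrArg Complex.re h.symm
  set e := hA.eigenvalues
  rw [show 1 - 4 * d = (e 0 - e 1) ^ 2 by linear_combination (-(e 0 + e 1 + 1)) * hsum + 4 * hprod,
    qubitEntropy_sq, show (1 + (e 0 - e 1)) / 2 = e 0 by linarith, vN, dif_pos hA,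
    Fin.sum_univ_two, binEnt, show 1 - e 0 = e 1 by linarith]
  ring

lemma blochState_eq (x y z : ℝ) : blochState x y z =
    !![(1 + (z : ℂ)) / 2, (x - y * Complex.I) / 2; (x + y * Complex.I) / 2, (1 - z) / 2] := by
  ext i j
  fin_cases i <;> fin_cases j <;> simp [blochState, PX, PY, PZ] <;> ring

lemma blochState_isHermitian (x y z : ℝ) : (blochState x y z).IsHermitian := by
  rw [blochState_eq]
  ext i j
  fin_cases i <;> fin_cases j <;> simp [Complex.ext_iff]

lemma trace_blochState (x y z : ℝ) : (blochState x y z).trace = 1 := by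
  rw [blochState_eq, trace_fin_two_of]
  ring

lemma det_blochState (x y z : ℝ) :
    (blochState x y z).det = ((1 - (x ^ 2 + y ^ 2 + z ^ 2)) / 4 : ℝ) := by
  rw [blochState_eq, det_fin_two_of]
  push_cast
  ring_nf
  rw [Complex.I_sq]
  ring

lemma vN_blochState (x y z : ℝ) : vN (blochState x y z) = qubitEntropy (x ^ 2 + y ^ 2 + z ^ 2) := by
  rw [vN_eq_qubitEntropy (blochState_isHermitian x y z) (trace_blochState x y z)
    (det_blochState x y z)]
  congr 1
  ring

section Channel

variable {p0 p1 : ℝ}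

lemma lam2_blochState (hp : p0 + p1 ≠ 0) (x y z : ℝ) :
    lam2 p0 p1 (blochState x y z) =
      blochState x ((p0 - p1) / (p0 + p1) * y) ((p0 - p1) / (p0 + p1) * z) := by
  have hp' : (p0 : ℂ) + p1 ≠ 0 := by exact_mod_cast hp
  rw [lam2, blochState_eq, blochState_eq]
  ext i j
  fin_cases i <;> fin_cases j <;> simp [PX] <;> field_simp <;> ring

lemma lam2c_eq_blochState (hp : p0 + p1 ≠ 0) (x : ℝ) :
    lam2c p0 p1 x = blochState (2 * √(p0 * p1) / (p0 + p1) * x) 0 ((p0 - p1) / (p0 + p1)) := by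
  have hp' : (p0 : ℂ) + p1 ≠ 0 := by exact_mod_cast hp
  rw [lam2c, blochState_eq]
  ext i j
  fin_cases i <;> fin_cases j <;> simp <;> field_simp <;> ring

lemma sq_sub_div_add_le_one (h0 : 0 ≤ p0) (h1 : 0 ≤ p1) : ((p0 - p1) / (p0 + p1)) ^ 2 ≤ 1 := by
  rw [div_pow]
  exact div_le_one_of_le₀ (by nlinarith) (sq_nonneg _)

lemma qubitEntropy_sq_sub_div_add (hp : p0 + p1 ≠ 0) :
    qubitEntropy (((p0 - p1) / (p0 + p1)) ^ 2) = binEnt (p1 / (p0 + p1)) := by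
  rw [qubitEntropy_sq, ← binEnt_one_sub]
  congr 1
  field_simp
  ring

lemma vN_lam2_blochState (hp : p0 + p1 ≠ 0) (x y z : ℝ) :
    vN (lam2 p0 p1 (blochState x y z)) =
      qubitEntropy (x ^ 2 + ((p0 - p1) / (p0 + p1)) ^ 2 * (y ^ 2 + z ^ 2)) := by
  rw [lam2_blochState hp, vN_blochState]
  congr 1
  ring

lemma vN_lam2c (h0 : 0 ≤ p0) (h1 : 0 ≤ p1) (hp : p0 + p1 ≠ 0) (x : ℝ) :
    vN (lam2c p0 p1 x) = qubitEntropy (((p0 - p1) / (p0 + p1)) ^ 2 +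
      (1 - ((p0 - p1) / (p0 + p1)) ^ 2) * x ^ 2) := by
  rw [lam2c_eq_blochState hp, vN_blochState]
  congr 1
  rw [mul_pow, div_pow, mul_pow, sq_sqrt (mul_nonneg h0 h1)]
  field_simp
  ring

end Channel

/-- Coherent information of `Λ₂`: for every Bloch state,
`S(Λ₂(ρ(x,y,z))) - S(Λ₂ᶜ(ρ(x,y,z))) ≤ 1 - h(p₁/(p₀+p₁))`, with equality at the
maximally mixed state; hence `max_ρ [S(Λ₂(ρ)) - S(Λ₂ᶜ(ρ))] = 1 - h(p₁/(p₀+p₁))`. -/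
theorem lam2_coherent_information (p0 p1 : ℝ) (h0 : 0 ≤ p0) (h1 : 0 ≤ p1)
    (hpos : 0 < p0 + p1) :
    (∀ x y z : ℝ, x ^ 2 + y ^ 2 + z ^ 2 ≤ 1 →
        vN (lam2 p0 p1 (blochState x y z)) - vN (lam2c p0 p1 x) ≤
          1 - binEnt (p1 / (p0 + p1))) ∧
    vN (lam2 p0 p1 (blochState 0 0 0)) - vN (lam2c p0 p1 0) = 1 - binEnt (p1 / (p0 + p1)) ∧
    IsGreatest
      {d : ℝ | ∃ x y z : ℝ, x ^ 2 + y ^ 2 + z ^ 2 ≤ 1 ∧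
        d = vN (lam2 p0 p1 (blochState x y z)) - vN (lam2c p0 p1 x)}
      (1 - binEnt (p1 / (p0 + p1))) := by
  have hp : p0 + p1 ≠ 0 := hpos.ne'
  have bound (x y z : ℝ) (hxyz : x ^ 2 + y ^ 2 + z ^ 2 ≤ 1) :
      vN (lam2 p0 p1 (blochState x y z)) - vN (lam2c p0 p1 x) ≤ 1 - binEnt (p1 / (p0 + p1)) := by
    rw [vN_lam2_blochState hp, vN_lam2c h0 h1 hp, ← qubitEntropy_sq_sub_div_add hp]
    exact qubitEntropy_sub_qubitEntropy_le (sq_sub_div_add_le_one h0 h1) hxyz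
  have at_zero : vN (lam2 p0 p1 (blochState 0 0 0)) - vN (lam2c p0 p1 0) =
      1 - binEnt (p1 / (p0 + p1)) := by
    simp [vN_lam2_blochState hp, vN_lam2c h0 h1 hp, qubitEntropy_sq_sub_div_add hp,
      qubitEntropy_zero]
  exact ⟨bound, at_zero, ⟨0, 0, 0, by norm_num, at_zero.symm⟩,
    fun d ⟨x, y, z, hxyz, hd⟩ => hd ▸ bound x y z hxyz⟩

end
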